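/- Let G be a graph on vertex set V and X = (X_i)_{i∈V} a G-dependent random vector such that each X_i takes values in a real interval of length c_i ≥ 0. Then for every t > 0, P( ∑_{i∈V} X_i − E[∑_{i∈V} X_i] ≥ t ) ≤ exp( −2t² / ( χ_f(G) · ∑_{i∈V} c_i² ) ), where χ_f(G) is the fractional chromatic number of G. -/

import Mathlib

open MeasureTheory ProbabilityTheory BigOperators

/-- `X` is `G`-dependent: families of variables indexed by disjoint non-adjacent
vertex sets are independent. -/
def GDependent {α : Type*} [MeasurableSpace α] (μ : Measure α)
    {n : ℕ} {Ω : Fin n → Type*} [∀ i, MeasurableSpace (Ω i)]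
    (G : SimpleGraph (Fin n)) (X : ∀ i, α → Ω i) : Prop :=
  ∀ S T : Finset (Fin n), Disjoint S T →
    (∀ i ∈ S, ∀ j ∈ T, ¬ G.Adj i j) →
    IndepFun (fun a => fun i : S => X i.1 a) (fun a => fun j : T => X j.1 a) μ

/-- `I` is an independent set of `G`. -/
def IsIndepFinset {n : ℕ} (G : SimpleGraph (Fin n)) (I : Finset (Fin n)) : Prop :=
  ∀ i ∈ I, ∀ j ∈ I, ¬ G.Adj i j

/-- `g` is a fractional coloring of `G`: a `[0,1]`-valued weighting of the independent
sets of `G` such that every vertex receives total weight at least `1`. -/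
def IsFracColoring {n : ℕ} (G : SimpleGraph (Fin n)) (g : Finset (Fin n) → ℝ) : Prop :=
  (∀ I, 0 ≤ g I ∧ g I ≤ 1) ∧ (∀ I, ¬ IsIndepFinset G I → g I = 0) ∧
    ∀ v : Fin n, 1 ≤ ∑ I ∈ Finset.univ.filter (fun I : Finset (Fin n) => v ∈ I), g I

/-- The fractional chromatic number of `G`. -/
noncomputable def fracChromatic {n : ℕ} (G : SimpleGraph (Fin n)) : ℝ :=
  sInf {x : ℝ | ∃ g : Finset (Fin n) → ℝ, IsFracColoring G g ∧ x = ∑ I : Finset (Fin n), g I}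


/-! Janson's argument. Take a fractional coloring `g` of total weight `W = fracChromatic G` (the
infimum is attained by compactness) and let `T i = coverWeight g i ≥ 1` be the weight of the sets
containing `i`. Then `∑ i, (X i - μ[X i])` is the convex combination, with weights `g I / W`, of
the variables `W * ∑ i ∈ I, (X i - μ[X i]) / T i` over independent sets `I`. Each of these is a sum of
independent bounded variables, hence sub-Gaussian with parameter `∑ i ∈ I, (W * c i / T i) ^ 2 / 4`
by Hoeffding's lemma, and by Hölder's inequality a convex combination of sub-Gaussian variables,
however dependent, is sub-Gaussian with the averaged parameter, here
`W * ∑ i, c i ^ 2 / (4 * T i) ≤ W * ∑ i, c i ^ 2 / 4`. The Chernoff bound concludes. -/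

open Real
open scoped NNReal

lemma ENNReal.prod_ofReal_exp_rpow {ι : Type*} (s : Finset ι) (p : ι → ℝ≥0) (z : ι → ℝ) :
    ∏ i ∈ s, ENNReal.ofReal (exp (z i)) ^ (p i : ℝ)
      = ENNReal.ofReal (exp (∑ i ∈ s, p i * z i)) := by
  rw [exp_sum, ENNReal.ofReal_prod_of_nonneg fun i _ => exp_nonneg _]
  refine Finset.prod_congr rfl fun i _ => ?_
  rw [ENNReal.ofReal_rpow_of_nonneg (exp_nonneg _) (p i).coe_nonneg, ← exp_mul, mul_comm]

namespace ProbabilityTheory.HasSubgaussianMGF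

variable {Ω ι : Type*} [MeasurableSpace Ω] {μ : Measure Ω}

lemma mono {Y : Ω → ℝ} {c d : ℝ≥0} (h : HasSubgaussianMGF Y c μ) (hcd : c ≤ d) :
    HasSubgaussianMGF Y d μ where
  integrable_exp_mul := h.integrable_exp_mul
  mgf_le t := (h.mgf_le t).trans (exp_le_exp.mpr (by gcongr))

lemma sum_mul_of_sum_eq_one {s : Finset ι} {Y : ι → Ω → ℝ} {c p : ι → ℝ≥0}
    (hp : ∑ i ∈ s, p i = 1) (hY : ∀ i ∈ s, HasSubgaussianMGF (Y i) (c i) μ) :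
    HasSubgaussianMGF (fun ω => ∑ i ∈ s, p i * Y i ω) (∑ i ∈ s, p i * c i) μ := by
  have hmeas (t : ℝ) : AEStronglyMeasurable (fun ω => exp (t * ∑ i ∈ s, p i * Y i ω)) μ :=
    (continuous_exp.measurable.comp_aemeasurable ((Finset.aemeasurable_fun_sum s fun i hi =>
      (hY i hi).aemeasurable.const_mul _).const_mul t)).aestronglyMeasurable
  have hbound (t : ℝ) : ∫⁻ ω, ENNReal.ofReal (exp (t * ∑ i ∈ s, p i * Y i ω)) ∂μ
      ≤ ENNReal.ofReal (exp ((∑ i ∈ s, p i * c i : ℝ≥0) * t ^ 2 / 2)) := by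
    calc ∫⁻ ω, ENNReal.ofReal (exp (t * ∑ i ∈ s, p i * Y i ω)) ∂μ
        = ∫⁻ ω, ∏ i ∈ s, ENNReal.ofReal (exp (t * Y i ω)) ^ (p i : ℝ) ∂μ := by
          simp_rw [ENNReal.prod_ofReal_exp_rpow, Finset.mul_sum, mul_left_comm]
      _ ≤ ∏ i ∈ s, (∫⁻ ω, ENNReal.ofReal (exp (t * Y i ω)) ∂μ) ^ (p i : ℝ) :=
          ENNReal.lintegral_prod_norm_pow_le s
            (fun i hi => ((hY i hi).integrable_exp_mul t).1.aemeasurable.ennreal_ofReal)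
            (by exact_mod_cast hp) (fun i _ => (p i).coe_nonneg)
      _ ≤ ∏ i ∈ s, ENNReal.ofReal (exp (c i * t ^ 2 / 2)) ^ (p i : ℝ) := by
          gcongr with i hi
          rw [← ofReal_integral_eq_lintegral_ofReal ((hY i hi).integrable_exp_mul t)
            (ae_of_all _ fun _ => exp_nonneg _)]
          exact ENNReal.ofReal_le_ofReal ((hY i hi).mgf_le t)
      _ = ENNReal.ofReal (exp ((∑ i ∈ s, p i * c i : ℝ≥0) * t ^ 2 / 2)) := by
          rw [ENNReal.prod_ofReal_exp_rpow]
          push_cast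
          rw [Finset.sum_mul, Finset.sum_div]
          congr! 3 with i
          ring
  have hint (t : ℝ) : Integrable (fun ω => exp (t * ∑ i ∈ s, p i * Y i ω)) μ := by
    refine ⟨hmeas t, ?_⟩
    rw [hasFiniteIntegral_iff_ofReal (ae_of_all _ fun _ => exp_nonneg _)]
    exact (hbound t).trans_lt ENNReal.ofReal_lt_top
  refine ⟨hint, fun t => ?_⟩
  rw [mgf, ← ENNReal.ofReal_le_ofReal_iff (exp_nonneg _),
    ofReal_integral_eq_lintegral_ofReal (hint t) (ae_of_all _ fun _ => exp_nonneg _)]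
  exact hbound t

end ProbabilityTheory.HasSubgaussianMGF

section GDependent

variable {n : ℕ} {α : Type*} [MeasurableSpace α] {μ : Measure α} [IsZeroOrProbabilityMeasure μ]
  {G : SimpleGraph (Fin n)} {Ω : Fin n → Type*} [∀ i, MeasurableSpace (Ω i)] {X : ∀ i, α → Ω i}

lemma IsIndepFinset.mono {I J : Finset (Fin n)} (hJ : IsIndepFinset G J) (hIJ : I ⊆ J) :
    IsIndepFinset G I :=
  fun i hi j hj => hJ i (hIJ hi) j (hIJ hj)

lemma GDependent.hasSubgaussianMGF_sum (hdep : GDependent μ G X) {f : ∀ i, Ω i → ℝ}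
    (hf : ∀ i, Measurable (f i)) {c : Fin n → ℝ≥0} {I : Finset (Fin n)} (hI : IsIndepFinset G I)
    (hsub : ∀ i ∈ I, HasSubgaussianMGF (fun a => f i (X i a)) (c i) μ) :
    HasSubgaussianMGF (fun a => ∑ i ∈ I, f i (X i a)) (∑ i ∈ I, c i) μ := by
  classical
  induction I using Finset.induction_on with
  | empty => simp
  | insert j I hj ih =>
    have hindep : IndepFun (fun a => f j (X j a)) (fun a => ∑ i ∈ I, f i (X i a)) μ := by
      have h := hdep {j} I (Finset.disjoint_singleton_left.mpr hj) fun i hi k hk => by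
        rw [Finset.mem_singleton.mp hi]
        exact hI j (Finset.mem_insert_self j I) k (Finset.mem_insert_of_mem hk)
      have hφ : Measurable fun v : ∀ i : ({j} : Finset (Fin n)), Ω i =>
          f j (v ⟨j, Finset.mem_singleton_self j⟩) :=
        (hf j).comp (measurable_pi_apply _)
      have hψ : Measurable fun v : ∀ i : I, Ω i => ∑ i : I, f i (v i) :=
        Finset.measurable_sum _ fun i _ => (hf i).comp (measurable_pi_apply i)
      convert h.comp hφ hψ using 1
      · rfl
      ext a
      exact (Finset.sum_coe_sort I fun i => f i (X i a)).symm
    simp_rw [Finset.sum_insert hj]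
    exact (hsub j (Finset.mem_insert_self j I)).add_of_indepFun
      (ih (hI.mono (Finset.subset_insert j I)) fun i hi => hsub i (Finset.mem_insert_of_mem hi))
      hindep

end GDependent

section FracColoring

def coverWeight {V : Type*} [Fintype V] [DecidableEq V] (g : Finset V → ℝ) (v : V) : ℝ :=
  ∑ I with v ∈ I, g I

lemma sum_mul_sum_eq_sum_mul_coverWeight {V : Type*} [Fintype V] [DecidableEq V]
    (g : Finset V → ℝ) (f : V → ℝ) :
    ∑ I, g I * ∑ i ∈ I, f i = ∑ i, f i * coverWeight g i := by
  calc ∑ I, g I * ∑ i ∈ I, f i = ∑ I, ∑ i ∈ I, g I * f i := by simp_rw [Finset.mul_sum]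
    _ = ∑ i, ∑ I with i ∈ I, g I * f i := Finset.sum_comm' (by simp)
    _ = ∑ i, f i * coverWeight g i := by simp_rw [coverWeight, Finset.mul_sum, mul_comm]

variable {n : ℕ} {G : SimpleGraph (Fin n)} {g : Finset (Fin n) → ℝ}

lemma IsFracColoring.nonneg (hg : IsFracColoring G g) (I : Finset (Fin n)) : 0 ≤ g I :=
  (hg.1 I).1

lemma IsFracColoring.one_le_coverWeight (hg : IsFracColoring G g) (v : Fin n) :
    1 ≤ coverWeight g v :=
  hg.2.2 v

lemma IsFracColoring.coverWeight_pos (hg : IsFracColoring G g) (v : Fin n) :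
    0 < coverWeight g v :=
  one_pos.trans_le (hg.one_le_coverWeight v)

lemma IsFracColoring.sum_filter_isIndepFinset [DecidablePred (IsIndepFinset G)]
    (hg : IsFracColoring G g) {f : Finset (Fin n) → ℝ} (hf : ∀ I, g I = 0 → f I = 0) :
    ∑ I with IsIndepFinset G I, f I = ∑ I, f I :=
  Finset.sum_filter_of_ne fun I _ hI => by_contra fun h => hI (hf I (hg.2.1 I h))

lemma IsFracColoring.sum_isIndepFinset_div_mul_sum [DecidablePred (IsIndepFinset G)]
    (hg : IsFracColoring G g) (hW : 0 < ∑ I, g I) (f : Fin n → ℝ) :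
    ∑ I with IsIndepFinset G I,
      g I / (∑ J, g J) * ∑ i ∈ I, (∑ J, g J) / coverWeight g i * f i = ∑ i, f i := by
  have hT (i : Fin n) : coverWeight g i ≠ 0 := (hg.coverWeight_pos i).ne'
  calc ∑ I with IsIndepFinset G I,
        g I / (∑ J, g J) * ∑ i ∈ I, (∑ J, g J) / coverWeight g i * f i
      = ∑ I, g I * ∑ i ∈ I, f i / coverWeight g i := by
        rw [hg.sum_filter_isIndepFinset fun I h => by simp [h]]
        refine Finset.sum_congr rfl fun I _ => ?_
        simp only [Finset.mul_sum]
        refine Finset.sum_congr rfl fun i _ => ?_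
        field_simp [hT i, hW.ne']
    _ = ∑ i, f i := by
        rw [sum_mul_sum_eq_sum_mul_coverWeight]
        exact Finset.sum_congr rfl fun i _ => div_mul_cancel₀ _ (hT i)

lemma isIndepFinset_singleton (v : Fin n) : IsIndepFinset G {v} := by
  intro i hi j hj
  rw [Finset.mem_singleton.mp hi, Finset.mem_singleton.mp hj]
  exact G.irrefl

lemma isFracColoring_indicator [DecidablePred (IsIndepFinset G)] :
    IsFracColoring G fun I => if IsIndepFinset G I then 1 else 0 := by
  refine ⟨fun I => by beta_reduce; split_ifs <;> norm_num, fun I hI => if_neg hI, fun v => ?_⟩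
  calc (1 : ℝ) = if IsIndepFinset G {v} then 1 else 0 :=
        (if_pos (isIndepFinset_singleton v)).symm
    _ ≤ _ := Finset.single_le_sum (f := fun I => if IsIndepFinset G I then (1 : ℝ) else 0)
          (fun I _ => by split_ifs <;> norm_num) (by simp)

lemma isCompact_setOf_isFracColoring (G : SimpleGraph (Fin n)) :
    IsCompact {g | IsFracColoring G g} := by
  refine isCompact_Icc.of_isClosed_subset ?_
    fun g hg => ⟨fun I => (hg.1 I).1, fun I => (hg.1 I).2⟩
  simp only [IsFracColoring, Set.ofPred_and, Set.ofPred_forall]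
  exact (isClosed_iInter fun I => (isClosed_le continuous_const (continuous_apply I)).inter
      (isClosed_le (continuous_apply I) continuous_const)).inter
    ((isClosed_iInter fun I => isClosed_iInter fun _ =>
      isClosed_eq (continuous_apply I) continuous_const).inter
    (isClosed_iInter fun v => isClosed_le continuous_const
      (continuous_finsetSum _ fun I _ => continuous_apply I)))

lemma exists_isFracColoring_sum_eq_fracChromatic (G : SimpleGraph (Fin n)) :
    ∃ g, IsFracColoring G g ∧ ∑ I, g I = fracChromatic G := by
  classical
  obtain ⟨g, hg, hmin⟩ := (isCompact_setOf_isFracColoring G).exists_isMinOn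
    ⟨_, isFracColoring_indicator⟩
    (continuous_finsetSum Finset.univ fun I _ => continuous_apply I).continuousOn
  have hleast : IsLeast {x | ∃ g, IsFracColoring G g ∧ x = ∑ I, g I} (∑ I, g I) := by
    refine ⟨⟨g, hg, rfl⟩, ?_⟩
    rintro _ ⟨g', hg', rfl⟩
    exact hmin hg'
  exact ⟨g, hg, hleast.csInf_eq.symm⟩

end FracColoring

section Concentration

variable {α : Type*} [MeasurableSpace α] {μ : Measure α} [IsProbabilityMeasure μ]

lemma hasSubgaussianMGF_const_mul_sub_integral_of_mem_Icc {Y : α → ℝ} (hY : AEMeasurable Y μ)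
    {a c : ℝ} (h : ∀ ω, Y ω ∈ Set.Icc a (a + c)) (r : ℝ) :
    HasSubgaussianMGF (fun ω => r * (Y ω - μ[Y])) (‖r * c‖₊ ^ 2 / 4) μ := by
  refine ((hasSubgaussianMGF_of_mem_Icc hY (ae_of_all _ h)).const_mul r).mono (le_of_eq ?_)
  rw [← NNReal.coe_inj]
  -- `const_mul` builds its parameter with an anonymous constructor that `push_cast` cannot see
  show r ^ 2 * (‖a + c - a‖ / 2) ^ 2 = ‖r * c‖ ^ 2 / 4
  rw [add_sub_cancel_left, norm_mul, Real.norm_eq_abs r, mul_pow, sq_abs]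
  ring

variable {n : ℕ} {G : SimpleGraph (Fin n)} {X : Fin n → α → ℝ} {a c : Fin n → ℝ}
  {g : Finset (Fin n) → ℝ}

lemma GDependent.hasSubgaussianMGF_sum_sub_integral (hX : ∀ i, AEMeasurable (X i) μ)
    (hdep : GDependent μ G X) (hrange : ∀ i ω, X i ω ∈ Set.Icc (a i) (a i + c i))
    (hg : IsFracColoring G g) (hW : 0 < ∑ I, g I) :
    HasSubgaussianMGF (fun ω => ∑ i, (X i ω - μ[X i]))
      ((∑ I, g I) * ∑ i, c i ^ 2 / 4).toNNReal μ := by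
  classical
  set W := ∑ I, g I
  let p (I : Finset (Fin n)) : ℝ≥0 := ⟨g I / W, div_nonneg (hg.nonneg I) hW.le⟩
  let r (i : Fin n) : ℝ := W / coverWeight g i
  have hp : ∑ I with IsIndepFinset G I, p I = 1 := by
    rw [← NNReal.coe_inj, NNReal.coe_sum, NNReal.coe_one]
    show ∑ I with IsIndepFinset G I, g I / W = 1
    rw [← Finset.sum_div, hg.sum_filter_isIndepFinset fun _ => id, div_self hW.ne']
  have hsub := HasSubgaussianMGF.sum_mul_of_sum_eq_one hp fun I hI =>
    hdep.hasSubgaussianMGF_sum (f := fun i x => r i * (x - μ[X i]))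
      (fun i => measurable_const.mul (measurable_id.sub_const _)) (Finset.mem_filter.mp hI).2
      fun i _ => hasSubgaussianMGF_const_mul_sub_integral_of_mem_Icc (hX i) (hrange i) (r i)
  refine (hsub.congr (ae_of_all _ fun ω => hg.sum_isIndepFinset_div_mul_sum hW _)).mono ?_
  rw [Real.le_toNNReal_iff_coe_le (by positivity)]
  push_cast
  calc ∑ I with IsIndepFinset G I, (g I / W) * ∑ i ∈ I, ‖r i * c i‖ ^ 2 / 4
      = ∑ I with IsIndepFinset G I, (g I / W) * ∑ i ∈ I, r i * (r i * (c i ^ 2 / 4)) := by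
        refine Finset.sum_congr rfl fun I _ => congrArg _ (Finset.sum_congr rfl fun i _ => ?_)
        rw [Real.norm_eq_abs, sq_abs]
        ring
    _ = W * ∑ i, c i ^ 2 / 4 / coverWeight g i := by
        rw [hg.sum_isIndepFinset_div_mul_sum hW, Finset.mul_sum]
        exact Finset.sum_congr rfl fun i _ => by ring
    _ ≤ W * ∑ i, c i ^ 2 / 4 := mul_le_mul_of_nonneg_left (Finset.sum_le_sum fun i _ =>
        div_le_self (by positivity) (hg.one_le_coverWeight i)) hW.le

end Concentration

theorem janson_concentration_general {n : ℕ}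
    {α : Type*} [MeasurableSpace α] (μ : Measure α) [IsProbabilityMeasure μ]
    (G : SimpleGraph (Fin n))
    (c : Fin n → ℝ)
    (X : Fin n → α → ℝ) (hX : ∀ i, Measurable (X i))
    (hdep : GDependent μ G X)
    (hrange : ∀ i, ∃ a : ℝ, ∀ ω, X i ω ∈ Set.Icc a (a + c i))
    (t : ℝ) (ht : 0 < t) :
    μ {a | t ≤ (∑ i, X i a) - ∫ a, (∑ i, X i a) ∂μ}
      ≤ ENNReal.ofReal (Real.exp (-(2 * t ^ 2) /
          (fracChromatic G * ∑ i, c i ^ 2))) := by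
  choose a ha using hrange
  obtain ⟨g, hg, hgχ⟩ := exists_isFracColoring_sum_eq_fracChromatic G
  rcases (hgχ ▸ Finset.sum_nonneg fun I _ => hg.nonneg I : 0 ≤ fracChromatic G).eq_or_lt
    with hχ | hχ
  · rw [← hχ, zero_mul, div_zero, exp_zero, ENNReal.ofReal_one]
    exact prob_le_one
  have hZ := hdep.hasSubgaussianMGF_sum_sub_integral (fun i => (hX i).aemeasurable) ha hg
    (hgχ ▸ hχ)
  have hevent : {ω | t ≤ ∑ i, X i ω - ∫ ω, ∑ i, X i ω ∂μ}
      = {ω | t ≤ ∑ i, (X i ω - μ[X i])} := by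
    rw [integral_finsetSum _ fun i _ =>
      Integrable.of_mem_Icc _ _ (hX i).aemeasurable (ae_of_all _ (ha i))]
    simp_rw [Finset.sum_sub_distrib]
  rw [hevent, ← ofReal_measureReal]
  refine ENNReal.ofReal_le_ofReal ((hZ.measure_ge_le ht.le).trans_eq ?_)
  rw [hgχ, Real.coe_toNNReal _ (mul_nonneg hχ.le (by positivity)), ← Finset.sum_div]
  congr 1
  ring

theorem janson_concentration {n : ℕ}
    {α : Type*} [MeasurableSpace α] (μ : Measure α) [IsProbabilityMeasure μ]
    (G : SimpleGraph (Fin n))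
    (c : Fin n → ℝ) (hc : ∀ i, 0 ≤ c i)
    (X : Fin n → α → ℝ) (hX : ∀ i, Measurable (X i))
    (hdep : GDependent μ G X)
    (hrange : ∀ i, ∃ a : ℝ, ∀ ω, X i ω ∈ Set.Icc a (a + c i))
    (t : ℝ) (ht : 0 < t) :
    μ {a | t ≤ (∑ i, X i a) - ∫ a, (∑ i, X i a) ∂μ}
      ≤ ENNReal.ofReal (Real.exp (-(2 * t ^ 2) /
          (fracChromatic G * ∑ i, c i ^ 2))) :=
  janson_concentration_general μ G c X hX hdep hrange t ht
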